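/- arXiv:2104.03526 — 6 statements merged into one kernel-verified Lean document; each statement's English description precedes it below -/
import Mathlib

section
/- Let F be a field. Let M₀ be an a×c matrix over F, let N be a c×s matrix over F whose column span equals the kernel of M₀ (viewed as the kernel of the linear map v ↦ M₀v on F^c), let A be a b×t matrix and B a b×c matrix over F, and let L be a (t+s)×u matrix whose column span equals the kernel of the b×(t+s) matrix [A | B·N]. Then the column span of the (t+c)×u matrix [[I_t, 0],[0, N]]·L equals the kernel of the (a+b)×(t+c) block matrix [[0, M₀],[A, B]]. -/
/-!
A vector `(z₁, z₂)` is killed by `[[0, M₀], [A, B]]` iff `z₂ ∈ ker M₀ = range N`, say `z₂ = N y`,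
and `A z₁ + B N y = 0`, i.e. `(z₁, y) ∈ ker [A | B N]`. So that kernel is the image of
`ker [A | B N] = range L` under `diag(I, N)`, which is the range of `diag(I, N) * L`.
-/

open Matrix

section
variable {R : Type*} [CommSemiring R] {k l m n p : Type*}

lemma fromBlocks_one_zero_zero_mulVec [Fintype m] [Fintype p] [DecidableEq m]
    (N : Matrix n p R) (v : m ⊕ p → R) :
    fromBlocks (1 : Matrix m m R) 0 0 N *ᵥ v = Sum.elim (v ∘ Sum.inl) (N *ᵥ (v ∘ Sum.inr)) := by
  simp [fromBlocks_mulVec]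

lemma fromBlocks_zero_mulVec_eq_zero_iff [Fintype m] [Fintype n]
    (M₀ : Matrix k n R) (A : Matrix l m R) (B : Matrix l n R) (z : m ⊕ n → R) :
    fromBlocks (0 : Matrix k m R) M₀ A B *ᵥ z = 0 ↔
      M₀ *ᵥ (z ∘ Sum.inr) = 0 ∧ A *ᵥ (z ∘ Sum.inl) + B *ᵥ (z ∘ Sum.inr) = 0 := by
  rw [fromBlocks_mulVec, zero_mulVec, zero_add, ← Sum.elim_zero_zero, Sum.elim_eq_iff]

theorem map_ker_fromCols_mul_eq_ker_fromBlocks [Fintype m] [Fintype n] [Fintype p]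
    [DecidableEq m] (M₀ : Matrix k n R) (N : Matrix n p R) (A : Matrix l m R)
    (B : Matrix l n R) (hN : LinearMap.range N.mulVecLin = LinearMap.ker M₀.mulVecLin) :
    (LinearMap.ker (fromCols A (B * N)).mulVecLin).map
        (fromBlocks (1 : Matrix m m R) 0 0 N).mulVecLin =
      LinearMap.ker (fromBlocks (0 : Matrix k m R) M₀ A B).mulVecLin := by
  have hkerM₀ (x : n → R) : M₀ *ᵥ x = 0 ↔ ∃ y, N *ᵥ y = x := by
    simpa using (SetLike.ext_iff.mp hN x).symm
  ext z
  simp only [Submodule.mem_map, LinearMap.mem_ker, mulVecLin_apply,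
    fromBlocks_zero_mulVec_eq_zero_iff, fromCols_mulVec, ← mulVec_mulVec]
  constructor
  · rintro ⟨v, hv, rfl⟩
    rw [fromBlocks_one_zero_zero_mulVec]
    simp only [Sum.elim_comp_inl, Sum.elim_comp_inr]
    exact ⟨(hkerM₀ _).mpr ⟨_, rfl⟩, hv⟩
  · rintro ⟨hz₁, hz₂⟩
    obtain ⟨y, hy⟩ := (hkerM₀ _).mp hz₁
    refine ⟨Sum.elim (z ∘ Sum.inl) y, ?_, ?_⟩
    · simpa [hy] using hz₂
    · simp [fromBlocks_one_zero_zero_mulVec, hy]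
end

/-- Kernel-update step for the degree-by-degree construction of null spaces of
Macaulay matrices: if the columns of `N` span the kernel of `M₀`, and the
columns of `L` span the kernel of `[A | B·N]`, then the columns of
`[[I, 0], [0, N]] · L` span the kernel of the block matrix `[[0, M₀], [A, B]]`. -/
theorem stmt_0 (F : Type*) [Field F] (a b c s t u : ℕ)
    (M₀ : Matrix (Fin a) (Fin c) F) (N : Matrix (Fin c) (Fin s) F)
    (A : Matrix (Fin b) (Fin t) F) (B : Matrix (Fin b) (Fin c) F)
    (L : Matrix (Fin t ⊕ Fin s) (Fin u) F)
    (hN : LinearMap.range N.mulVecLin = LinearMap.ker M₀.mulVecLin)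
    (hL : LinearMap.range L.mulVecLin
      = LinearMap.ker (Matrix.fromCols A (B * N)).mulVecLin) :
    LinearMap.range ((Matrix.fromBlocks (1 : Matrix (Fin t) (Fin t) F) 0 0 N * L).mulVecLin)
      = LinearMap.ker (Matrix.fromBlocks (0 : Matrix (Fin a) (Fin t) F) M₀ A B).mulVecLin := by
  rw [mulVecLin_mul, LinearMap.range_comp, hL, map_ker_fromCols_mul_eq_ker_fromBlocks M₀ N A B hN]
end

section
/- Let n ≥ 1 and let β₁,…,βₙ be positive integers. For every integer t with t ≥ (∑_{i=1}^n β_i) − n, one has ∑_{S ⊆ {1,…,n}} (−1)^{|S|} · C(n + t − ∑_{i∈S} β_i, n) = ∏_{i=1}^n β_i, where the sum runs over all subsets S of {1,…,n} and C(a, n) denotes the binomial coefficient with the convention C(a, n) = 0 whenever a < n (in particular whenever a < 0). -/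
open Finset

private lemma hockey (m : ℕ) (β : ℕ) : ∀ (b : ℤ), (β : ℤ) ≤ b →
    ((b.toNat.choose (m+1) : ℤ)) - (((b - β).toNat.choose (m+1) : ℤ)) =
      ∑ j ∈ Finset.range β, (((b - 1 - j).toNat.choose m : ℕ) : ℤ) := by
  induction β with
  | zero => intro b hb; simp
  | succ β ih =>
    intro b hb
    have hb' : (β : ℤ) ≤ b := by push_cast at hb ⊢; omega
    rw [Finset.sum_range_succ, ← ih b hb']
    have h1 : (1 : ℤ) ≤ b - β := by push_cast at hb; omega
    have e1 : (b - (β : ℤ)).toNat = (b - 1 - (β : ℤ)).toNat + 1 := by omega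
    have e2 : b - ((β : ℕ) + 1 : ℕ) = b - 1 - (β : ℤ) := by push_cast; ring
    rw [e2, e1, Nat.choose_succ_succ]
    push_cast
    ring

private lemma aux {ι : Type*} [DecidableEq ι] (s : Finset ι) (β : ι → ℕ) :
    ∀ (t : ℤ), (∑ i ∈ s, (β i : ℤ)) - s.card ≤ t →
    ∑ S ∈ s.powerset,
        (-1 : ℤ) ^ S.card * (((s.card : ℤ) + t - ∑ i ∈ S, (β i : ℤ)).toNat.choose s.card)
      = ∏ i ∈ s, (β i : ℤ) := by
  induction s using Finset.induction_on with
  | empty => intro t ht; simp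
  | @insert a s ha ih =>
    intro t ht
    have hm : (insert a s).card = s.card + 1 := Finset.card_insert_of_notMem ha
    rw [Finset.sum_powerset_insert ha, hm]
    set m := s.card with hmdef
    have key : ∀ S ∈ s.powerset,
        (-1 : ℤ) ^ S.card * ((((m : ℤ) + 1) + t - ∑ i ∈ S, (β i : ℤ)).toNat.choose (m+1))
          + (-1 : ℤ) ^ (insert a S).card *
            ((((m : ℤ) + 1) + t - ∑ i ∈ insert a S, (β i : ℤ)).toNat.choose (m+1))
        = ∑ j ∈ Finset.range (β a), (-1 : ℤ) ^ S.card *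
            (((m : ℤ) + (t - j) - ∑ i ∈ S, (β i : ℤ)).toNat.choose m) := by
      intro S hS
      rw [Finset.mem_powerset] at hS
      have haS : a ∉ S := fun h => ha (hS h)
      have hcard : (insert a S).card = S.card + 1 := Finset.card_insert_of_notMem haS
      have hsum : ∑ i ∈ insert a S, (β i : ℤ) = (β a : ℤ) + ∑ i ∈ S, (β i : ℤ) :=
        Finset.sum_insert haS
      have hSle : ∑ i ∈ S, (β i : ℤ) ≤ ∑ i ∈ s, (β i : ℤ) :=
        Finset.sum_le_sum_of_subset_of_nonneg hS (by intro i _ _; positivity)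
      have hb : (β a : ℤ) ≤ ((m : ℤ) + 1) + t - ∑ i ∈ S, (β i : ℤ) := by
        have := ht
        rw [Finset.sum_insert ha, hm] at this
        push_cast at this ⊢
        omega
      have hk := hockey m (β a) (((m : ℤ) + 1) + t - ∑ i ∈ S, (β i : ℤ)) hb
      have hk' : ∑ j ∈ Finset.range (β a),
            (((((m : ℤ) + 1) + t - ∑ i ∈ S, (β i : ℤ)) - 1 - (j : ℤ)).toNat.choose m : ℤ)
          = ∑ j ∈ Finset.range (β a),
            ((((m : ℤ) + (t - j) - ∑ i ∈ S, (β i : ℤ))).toNat.choose m : ℤ) :=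
        Finset.sum_congr rfl fun j _ => by congr 2; ring
      rw [hk'] at hk
      have e3 : ((m : ℤ) + 1) + t - ((β a : ℤ) + ∑ i ∈ S, (β i : ℤ))
          = (((m : ℤ) + 1) + t - ∑ i ∈ S, (β i : ℤ)) - (β a : ℤ) := by ring
      rw [hcard, hsum, pow_succ, e3, ← Finset.mul_sum, ← hk]
      ring
    rw [← Finset.sum_add_distrib]
    calc ∑ S ∈ s.powerset,
          ((-1 : ℤ) ^ S.card * ((((m:ℤ)+1) + t - ∑ i ∈ S, (β i : ℤ)).toNat.choose (m+1))
            + (-1 : ℤ) ^ (insert a S).card *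
              ((((m:ℤ)+1) + t - ∑ i ∈ insert a S, (β i : ℤ)).toNat.choose (m+1)))
        = ∑ S ∈ s.powerset, ∑ j ∈ Finset.range (β a), (-1 : ℤ) ^ S.card *
            (((m : ℤ) + (t - j) - ∑ i ∈ S, (β i : ℤ)).toNat.choose m) :=
          Finset.sum_congr rfl key
      _ = ∑ j ∈ Finset.range (β a), ∑ S ∈ s.powerset, (-1 : ℤ) ^ S.card *
            (((m : ℤ) + (t - j) - ∑ i ∈ S, (β i : ℤ)).toNat.choose m) := Finset.sum_comm
      _ = ∑ j ∈ Finset.range (β a), ∏ i ∈ s, (β i : ℤ) := by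
          refine Finset.sum_congr rfl fun j hj => ?_
          apply ih
          rw [Finset.mem_range] at hj
          have := ht
          rw [Finset.sum_insert ha, hm] at this
          push_cast at this ⊢
          omega
      _ = ∏ i ∈ insert a s, (β i : ℤ) := by
          rw [Finset.sum_const, Finset.card_range, Finset.prod_insert ha]
          push_cast
          ring

/-- The alternating (Koszul/inclusion–exclusion) sum computing the nullity of the
Macaulay matrix: for `t ≥ ∑ βᵢ − n`, the alternating sum over subsets `S` of
`{1,…,n}` of `C(n + t − ∑_{i∈S} βᵢ, n)` equals the Bézout number `∏ βᵢ`.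
Here `C(a, n)` is interpreted as `0` whenever `a < n` (in particular when `a < 0`). -/
theorem stmt_1 (n : ℕ) (hn : 1 ≤ n) (β : Fin n → ℕ) (hβ : ∀ i, 0 < β i)
    (t : ℤ) (ht : (∑ i, (β i : ℤ)) - n ≤ t) :
    ∑ S : Finset (Fin n),
        (-1 : ℤ) ^ S.card * ((n + t - ∑ i ∈ S, (β i : ℤ)).toNat.choose n)
      = ∏ i, (β i : ℤ) := by
  have h := aux (Finset.univ : Finset (Fin n)) β t (by simpa using ht)
  simpa [Finset.powerset_univ] using h
end

section
/- For the devastating system, and for every i ∈ {1,…,n}, the polynomial x_i · q lies in the ideal I generated by p₁,…,pₙ in ℂ[x₁,…,xₙ]. -/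
/-!
Write `M = diag(x₁,…,xₙ) + εQ` over `ℂ[x₁,…,xₙ]`. Expanding the determinant of a diagonal
matrix plus a matrix by principal minors shows `q = det M`, and the definition of the `pᵢ`
says `M x = p`. Multiplying by the adjugate (Cramer's rule) gives
`det M · xᵢ = ∑ⱼ adj(M)ᵢⱼ pⱼ`.
-/

open MvPolynomial

namespace Matrix

variable {m R : Type*} [Fintype m] [DecidableEq m] [CommRing R]

theorem det_piecewise_one_eq_det_submatrix_compl (A : Matrix m m R) (s : Finset m) :
    det (Matrix.of <| s.piecewise (1 : Matrix m m R).row A.row) =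
      (A.submatrix (Subtype.val : {x // x ∉ s} → m) Subtype.val).det := by
  rw [← Finset.piecewise_compl, det_piecewise_one_eq_submatrix_det,
    ← det_submatrix_equiv_self (Equiv.subtypeEquivRight fun _ => Finset.mem_compl)]
  rfl

theorem det_diagonal_add (d : m → R) (A : Matrix m m R) :
    (diagonal d + A).det =
      ∑ s : Finset m,
        (∏ i ∈ s, d i) * (A.submatrix (Subtype.val : {x // x ∉ s} → m) Subtype.val).det := by
  refine (detRowAlternating.map_add_univ (diagonal d) A).trans
    (Finset.sum_congr rfl fun s _ => ?_)
  have hrows : s.piecewise (diagonal d) A =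
      fun i => (if i ∈ s then d i else 1) • s.piecewise (1 : Matrix m m R).row A.row i := by
    funext i j
    by_cases hi : i ∈ s <;> simp [Finset.piecewise, hi, diagonal_apply, one_apply]
  rw [hrows, detRowAlternating.map_smul_univ, Finset.prod_ite_mem, Finset.univ_inter, smul_eq_mul]
  exact congrArg _ (det_piecewise_one_eq_det_submatrix_compl A s)

theorem det_mul_mem_span_range_mulVec (M : Matrix m m R) (v : m → R) (i : m) :
    M.det * v i ∈ Ideal.span (Set.range (M *ᵥ v)) := by
  have cramer : M.det * v i = ∑ j, M.adjugate i j * (M *ᵥ v) j :=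
    calc M.det * v i = ((M.adjugate * M) *ᵥ v) i := by
          rw [adjugate_mul, smul_mulVec, one_mulVec, Pi.smul_apply, smul_eq_mul]
      _ = ∑ j, M.adjugate i j * (M *ᵥ v) j := by rw [← mulVec_mulVec]; rfl
  rw [cramer]
  exact Ideal.sum_mem _ fun j _ => Ideal.mul_mem_left _ _ (Ideal.subset_span ⟨j, rfl⟩)

end Matrix

theorem stmt_3_general (n : ℕ) (ε : ℝ) (Q : Matrix (Fin n) (Fin n) ℂ)
    (p : Fin n → MvPolynomial (Fin n) ℂ)
    (hp : ∀ i, p i = (X i) ^ 2 + C (ε : ℂ) * ∑ j, C (Q i j) * X j)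
    (q : MvPolynomial (Fin n) ℂ)
    (hq : q = ∑ ι : Finset (Fin n),
        C (Matrix.det (Matrix.of fun (i j : {x : Fin n // x ∉ ι}) =>
            (ε : ℂ) * Q i.1 j.1)) * ∏ k ∈ ι, X k)
    (i : Fin n) :
    X i * q ∈ Ideal.span (Set.range p) := by
  set M : Matrix (Fin n) (Fin n) (MvPolynomial (Fin n) ℂ) :=
    Matrix.diagonal X + ((ε : ℂ) • Q).map C
  have hq_det : q = M.det := by
    rw [hq, Matrix.det_diagonal_add]
    refine Finset.sum_congr rfl fun s _ => ?_
    rw [mul_comm, RingHom.map_det]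
    rfl
  have hp_mulVec : M.mulVec X = p := by
    funext a
    rw [Matrix.add_mulVec, Pi.add_apply, Matrix.mulVec_diagonal, hp, sq]
    simp [Matrix.mulVec, dotProduct, Finset.mul_sum, mul_assoc]
  rw [hq_det, mul_comm, ← hp_mulVec]
  exact M.det_mul_mem_span_range_mulVec X i

/-- For the devastating system `pᵢ = xᵢ² + ε·∑ⱼ qᵢⱼ xⱼ`, the polynomial
`x_i · q` lies in the ideal `I = (p₁,…,pₙ)`, where
`q = ∑_{ι ⊆ {1,…,n}} det(ε Q_ι) · ∏_{k∈ι} x_k` and `Q_ι` is the submatrix of `Q`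
obtained by deleting the rows and columns with indices in `ι`. -/
theorem stmt_3 (n : ℕ) (hn : 1 ≤ n) (ε : ℝ) (Q : Matrix (Fin n) (Fin n) ℂ)
    (p : Fin n → MvPolynomial (Fin n) ℂ)
    (hp : ∀ i, p i = (X i) ^ 2 + C (ε : ℂ) * ∑ j, C (Q i j) * X j)
    (q : MvPolynomial (Fin n) ℂ)
    (hq : q = ∑ ι : Finset (Fin n),
        C (Matrix.det (Matrix.of fun (i j : {x : Fin n // x ∉ ι}) =>
            (ε : ℂ) * Q i.1 j.1)) * ∏ k ∈ ι, X k)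
    (i : Fin n) :
    X i * q ∈ Ideal.span (Set.range p) :=
  stmt_3_general n ε Q p hp q hq i
end

section
/- For all integers n ≥ 2 and β ≥ 2, with d = nβ − n + 1, one has C(n + ⌊d/2⌋ − 1, n−1) ≥ 27^{−n} · C(n + d − 1, n−1). That is, the number of monomials of degree exactly ⌊d/2⌋ in n variables is at least 27^{−n} times the number of monomials of degree exactly d. -/
lemma choose_ratio_bound (d m : ℕ) (hdm : d ≤ 2 * m + 1) :
    ∀ k : ℕ, (d + k).choose k ≤ 3 ^ k * (m + k).choose k := by
  intro k
  induction k with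
  | zero => simp
  | succ k ih =>
    have h1 : (d + k + 1) * (d + k).choose k = (d + k + 1).choose (k + 1) * (k + 1) :=
      Nat.add_one_mul_choose_eq (d + k) k
    have h2 : (m + k + 1) * (m + k).choose k = (m + k + 1).choose (k + 1) * (k + 1) :=
      Nat.add_one_mul_choose_eq (m + k) k
    have key : (d + k + 1).choose (k + 1) * (k + 1)
        ≤ (3 ^ (k + 1) * (m + k + 1).choose (k + 1)) * (k + 1) := by
      rw [← h1]
      calc (d + k + 1) * (d + k).choose k
          ≤ (3 * (m + k + 1)) * (3 ^ k * (m + k).choose k) :=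
            Nat.mul_le_mul (by omega) ih
        _ = 3 ^ (k + 1) * ((m + k + 1) * (m + k).choose k) := by ring
        _ = (3 ^ (k + 1) * (m + k + 1).choose (k + 1)) * (k + 1) := by rw [h2]; ring
    exact Nat.le_of_mul_le_mul_right key (Nat.succ_pos k)

/-- For all `n ≥ 2` and `β ≥ 2`, with `d = nβ − n + 1` the Macaulay degree,
`C(n + ⌊d/2⌋ − 1, n−1) ≥ 27^{−n}·C(n + d − 1, n−1)`: the number of monomials of
degree exactly `⌊d/2⌋` in `n` variables is at least `27^{−n}` times the number
of monomials of degree exactly `d`. -/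
theorem stmt_12 (n β : ℕ) (hn : 2 ≤ n) (hβ : 2 ≤ β) :
    (((n + (n * β - n + 1) - 1).choose (n - 1) : ℝ)) / (27 : ℝ) ^ n
      ≤ ((n + (n * β - n + 1) / 2 - 1).choose (n - 1) : ℝ) := by
  set d := n * β - n + 1 with hd
  set m := d / 2 with hm
  have hdm : d ≤ 2 * m + 1 := by omega
  have h1 : n + d - 1 = d + (n - 1) := by omega
  have h2 : n + m - 1 = m + (n - 1) := by omega
  have hnat : (n + d - 1).choose (n - 1) ≤ 27 ^ n * (n + m - 1).choose (n - 1) := by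
    rw [h1, h2]
    calc (d + (n - 1)).choose (n - 1) ≤ 3 ^ (n - 1) * (m + (n - 1)).choose (n - 1) :=
          choose_ratio_bound d m hdm (n - 1)
      _ ≤ 27 ^ n * (m + (n - 1)).choose (n - 1) := by
          apply Nat.mul_le_mul_right
          calc 3 ^ (n - 1) ≤ 3 ^ (3 * n) := Nat.pow_le_pow_right (by norm_num) (by omega)
            _ = 27 ^ n := by rw [pow_mul]; norm_num
  rw [div_le_iff₀ (by positivity)]
  calc ((n + d - 1).choose (n - 1) : ℝ) ≤ (27 ^ n * (n + m - 1).choose (n - 1) : ℕ) := by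
        exact_mod_cast hnat
    _ = ((n + m - 1).choose (n - 1) : ℝ) * 27 ^ n := by push_cast; ring
end

section
/- For all integers n ≥ 2 and β ≥ 2, with d = nβ − n + 1, one has C(n + ⌊d/2⌋ − 1, n) ≥ 27^{−n} · C(n + d − 1, n). That is, the number of monomials of degree at most ⌊d/2⌋ − 1 in n variables is at least 27^{−n} times the number of monomials of degree at most d − 1. -/
/-! Passing from `C(n + k, n)` to `C(n + k + 1, n + 1)` multiplies by `(n + k + 1)/(n + 1)`.
For `k = 2m + 2` this factor is at most three times the one for `k = m`, so shrinking the
degree from `2m + 2` to `m` costs at most `3ⁿ`; the Macaulay degree `d ≥ 2` is then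
squeezed between `⌊d/2⌋` and `2⌊d/2⌋ + 1`. -/

namespace Nat

theorem choose_add_two_mul_add_two_le (m : ℕ) :
    ∀ n : ℕ, (n + 2 * m + 2).choose n ≤ 3 ^ n * (n + m).choose n
  | 0 => by simp
  | n + 1 => by
    have step (k : ℕ) : (n + 1 + k).choose (n + 1) * (n + 1) = (n + k + 1) * (n + k).choose n := by
      rw [add_one_mul_choose_eq, add_right_comm]
    refine Nat.le_of_mul_le_mul_right ?_ n.succ_pos
    calc (n + 1 + 2 * m + 2).choose (n + 1) * (n + 1)
        = (n + (2 * m + 2) + 1) * (n + 2 * m + 2).choose n := by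
          rw [add_assoc (n + 1), step, ← add_assoc]
      _ ≤ (3 * (n + m + 1)) * (3 ^ n * (n + m).choose n) :=
          Nat.mul_le_mul (by omega) (choose_add_two_mul_add_two_le m n)
      _ = 3 ^ (n + 1) * ((n + 1 + m).choose (n + 1) * (n + 1)) := by rw [step]; ring
      _ = 3 ^ (n + 1) * (n + 1 + m).choose (n + 1) * (n + 1) := by ring

theorem choose_add_sub_one_le_three_pow_mul_choose_half {d : ℕ} (hd : 2 ≤ d) (n : ℕ) :
    (n + d - 1).choose n ≤ 3 ^ n * (n + d / 2 - 1).choose n := by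
  obtain ⟨m, hm⟩ : ∃ m, d / 2 = m + 1 := ⟨d / 2 - 1, by omega⟩
  calc (n + d - 1).choose n ≤ (n + 2 * m + 2).choose n := choose_le_choose n (by omega)
    _ ≤ 3 ^ n * (n + m).choose n := choose_add_two_mul_add_two_le m n
    _ = 3 ^ n * (n + d / 2 - 1).choose n := by rw [hm, ← add_assoc, Nat.add_sub_cancel]

end Nat

/-- For all `n ≥ 2` and `β ≥ 2`, with `d = nβ − n + 1` the Macaulay degree,
`C(n + ⌊d/2⌋ − 1, n) ≥ 27^{−n}·C(n + d − 1, n)`: the number of monomials of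
degree at most `⌊d/2⌋ − 1` in `n` variables is at least `27^{−n}` times the
number of monomials of degree at most `d − 1`. -/
theorem stmt_13 (n β : ℕ) (hn : 2 ≤ n) (hβ : 2 ≤ β) :
    (((n + (n * β - n + 1) - 1).choose n : ℝ)) / (27 : ℝ) ^ n
      ≤ ((n + (n * β - n + 1) / 2 - 1).choose n : ℝ) := by
  have hd : 2 ≤ n * β - n + 1 := by
    have : n * 2 ≤ n * β := Nat.mul_le_mul_left n hβ
    omega
  have key : (n + (n * β - n + 1) - 1).choose n ≤ 27 ^ n * (n + (n * β - n + 1) / 2 - 1).choose n :=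
    (Nat.choose_add_sub_one_le_three_pow_mul_choose_half hd n).trans
      (Nat.mul_le_mul_right _ (Nat.pow_le_pow_left (by norm_num) n))
  rw [div_le_iff₀ (by positivity)]
  exact_mod_cast key.trans_eq (mul_comm _ _)
end

section
/- For all integers n ≥ 2 and β ≥ 2, with d = nβ − n + 1, one has C(n + ⌊(d+β)/2⌋ − β, n) ≥ (2n+1)^{−(2n+1)} · C(n + d − β, n). Equivalently, with P_k = n·C(n+k−β, n) the number of degree-k Macaulay rows, P_{⌊(d+β)/2⌋} ≥ (2n+1)^{−(2n+1)} · P_d. -/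
/-- For all `n ≥ 2` and `β ≥ 2`, with `d = nβ − n + 1` the Macaulay degree,
`C(n + ⌊(d+β)/2⌋ − β, n) ≥ (2n+1)^{−(2n+1)}·C(n + d − β, n)`; equivalently,
with `P_k = n·C(n+k−β, n)` the number of degree-`k` Macaulay rows,
`P_{⌊(d+β)/2⌋} ≥ (2n+1)^{−(2n+1)}·P_d`. -/
theorem stmt_14 (n β : ℕ) (hn : 2 ≤ n) (hβ : 2 ≤ β) :
    (((n + (n * β - n + 1) - β).choose n : ℝ)) / (2 * (n : ℝ) + 1) ^ (2 * n + 1)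
      ≤ ((n + ((n * β - n + 1) + β) / 2 - β).choose n : ℝ) := by
  set d := n * β - n + 1 with hd
  set A := n + d - β with hA
  set B := n + (d + β) / 2 - β with hB
  -- basic arithmetic facts
  have hnb : n ≤ n * β := Nat.le_mul_of_pos_right n (by omega)
  have hdβ : β ≤ d := by
    have : n + β ≤ n * β + 1 := by
      have := Nat.add_le_mul hn hβ
      omega
    omega
  have hhalf : β ≤ (d + β) / 2 := by omega
  have hkey : A + n ≤ 2 * B + 1 := by
    have h2 : 2 * ((d + β) / 2) + 1 ≥ d + β := by omega
    omega
  -- descFactorial comparison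
  have hdesc : A.descFactorial n ≤ 2 ^ n * B.descFactorial n := by
    rw [Nat.descFactorial_eq_prod_range, Nat.descFactorial_eq_prod_range]
    have h := Finset.prod_le_prod' (s := Finset.range n) (f := fun i => A - i)
      (g := fun i => 2 * (B - i)) (fun i hi => by
        have hi' : i < n := Finset.mem_range.mp hi
        show A - i ≤ 2 * (B - i)
        omega)
    rwa [Finset.prod_mul_distrib, Finset.prod_const, Finset.card_range] at h
  have hchoose : A.choose n ≤ 2 ^ n * B.choose n := by
    rw [Nat.descFactorial_eq_factorial_mul_choose, Nat.descFactorial_eq_factorial_mul_choose] at hdesc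
    have hfac : 0 < n.factorial := Nat.factorial_pos n
    calc A.choose n = n.factorial * A.choose n / n.factorial := by rw [Nat.mul_div_cancel_left _ hfac]
      _ ≤ 2 ^ n * (n.factorial * B.choose n) / n.factorial := Nat.div_le_div_right hdesc
      _ = 2 ^ n * B.choose n := by
          rw [show 2 ^ n * (n.factorial * B.choose n) = n.factorial * (2 ^ n * B.choose n) by ring,
            Nat.mul_div_cancel_left _ hfac]
  -- pass to ℝ
  have h2n : (2 : ℝ) ^ n ≤ (2 * (n : ℝ) + 1) ^ (2 * n + 1) := by
    calc (2 : ℝ) ^ n ≤ (2 * (n : ℝ) + 1) ^ n := by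
          apply pow_le_pow_left₀ (by norm_num)
          have : (1 : ℝ) ≤ n := by exact_mod_cast Nat.one_le_of_lt hn
          linarith
      _ ≤ (2 * (n : ℝ) + 1) ^ (2 * n + 1) := by
          apply pow_le_pow_right₀
          · have : (1 : ℝ) ≤ n := by exact_mod_cast Nat.one_le_of_lt hn
            linarith
          · omega
  have hpos : (0 : ℝ) < (2 * (n : ℝ) + 1) ^ (2 * n + 1) := by positivity
  rw [div_le_iff₀ hpos]
  calc (A.choose n : ℝ) ≤ 2 ^ n * B.choose n := by exact_mod_cast hchoose
    _ ≤ (B.choose n : ℝ) * (2 * (n : ℝ) + 1) ^ (2 * n + 1) := by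
        rw [mul_comm]
        apply mul_le_mul_of_nonneg_left h2n (by positivity)
end
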